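/- arXiv:2212.06028 — 7 statements merged into one kernel-verified Lean document; each statement's English description precedes it below -/
import Mathlib

section
/- If t > 0 is such that the modified log-Sobolev inequality Ent(f) ≤ t·E(f, log f) holds for every function f : X → (0,∞), then the Poincaré inequality Var(f) ≤ 2t·E(f, f) holds for every function f : X → (0,∞). Equivalently, t_rel/2 ≤ t_MLS. -/
/-!
Linearize the modified log-Sobolev inequality around the constant function `1`. For `g` of mean
zero and `fε = 1 + ε g`, the expansions `(1 + u) log (1 + u) = u + u² / 2 + O(u³)` and
`log (1 + u) = u + O(u²)` give `Ent(fε) = ε² Var(g) / 2 + O(ε³)` and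
`E(fε, log fε) = ε² E(g, g) + O(ε³)`. Dividing the inequality `Ent(fε) ≤ t E(fε, log fε)` by `ε²`
and letting `ε → 0` yields `Var(g) ≤ 2 t E(g, g)`; both sides are invariant under `f ↦ f - E[f]`.
-/

open Finset

noncomputable section

variable {X : Type*} [Fintype X] [DecidableEq X] [Nonempty X]

/-- Dirichlet form `E(f,g) = (1/2) ∑_{x,y} π(x) Q(x,y) (f(x)-f(y))(g(x)-g(y))`. -/
def dirichletForm (π : X → ℝ) (Q : X → X → ℝ) (f g : X → ℝ) : ℝ :=
  (1 / 2) * ∑ x : X, ∑ y : X, π x * Q x y * (f x - f y) * (g x - g y)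

/-- Mean `E[f] = ∑_x π(x) f(x)`. -/
def mean (π : X → ℝ) (f : X → ℝ) : ℝ := ∑ x : X, π x * f x

/-- Entropy `Ent(f) = E[f log f] - E[f] log E[f]`. -/
def entropy (π : X → ℝ) (f : X → ℝ) : ℝ :=
  mean π (fun x => f x * Real.log (f x)) - mean π f * Real.log (mean π f)

/-- Variance `Var(f) = E[f²] - E[f]²`. -/
def variance (π : X → ℝ) (f : X → ℝ) : ℝ :=
  mean π (fun x => f x ^ 2) - (mean π f) ^ 2

/-- Total jump rate `Q(x) = ∑_{y ≠ x} Q(x,y)`. -/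
def jumpRate (Q : X → X → ℝ) (x : X) : ℝ := ∑ y ∈ univ.erase x, Q x y

/-- Sparsity parameter `p = min_{(x,y) ∈ E} Q(x,y) / max(Q(x), Q(y,x))`. -/
def sparsity (Q : X → X → ℝ) : ℝ :=
  sInf {s : ℝ | ∃ x y : X, x ≠ y ∧ 0 < Q x y ∧
    s = Q x y / max (jumpRate Q x) (Q y x)}

/-- The transition graph `(X, E)` (symmetric since under reversibility
`Q(x,y) > 0 ↔ Q(y,x) > 0`). -/
def chainGraph (Q : X → X → ℝ) : SimpleGraph X where
  Adj x y := x ≠ y ∧ (0 < Q x y ∨ 0 < Q y x)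
  symm := by constructor; intro x y h; exact ⟨h.1.symm, h.2.symm⟩
  loopless := by constructor; intro x h; exact h.1 rfl

/-- Graph distance on `(X, E)`. -/
def graphDist (Q : X → X → ℝ) (x y : X) : ℕ := (chainGraph Q).dist x y

/-- Regularization `f⋆(x) = max_z r^{-d(x,z)} f(z)`. -/
def fStar (Q : X → X → ℝ) (r : ℝ) (f : X → ℝ) (x : X) : ℝ :=
  univ.sup' univ_nonempty (fun z => r ^ (-(graphDist Q x z : ℤ)) * f z)

/-- `(x,y)` is an allowed transition. -/
def IsEdge (Q : X → X → ℝ) (e : X × X) : Prop := e.1 ≠ e.2 ∧ 0 < Q e.1 e.2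

/-- The edge set `E = {(x,y) : x ≠ y, Q(x,y) > 0}` as a finset. -/
def edges (Q : X → X → ℝ) : Finset (X × X) :=
  univ.filter (fun e => e.1 ≠ e.2 ∧ 0 < Q e.1 e.2)

/-- Edge weight `c(x,y) = π(x) Q(x,y)`. -/
def edgeWeight (π : X → ℝ) (Q : X → X → ℝ) (e : X × X) : ℝ := π e.1 * Q e.1 e.2

/-- Distance between edges: `d(e,e') = ℓ - 1` where `ℓ` is the minimal length of a
path `(x_0, …, x_ℓ)` with `(x_0,x_1) = e` and `(x_{ℓ-1}, x_ℓ) = e'`. -/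
def edgeDist (Q : X → X → ℝ) (e e' : X × X) : ℕ :=
  sInf {n : ℕ | ∃ c : ℕ → X, c 0 = e.1 ∧ c 1 = e.2 ∧ c n = e'.1 ∧ c (n + 1) = e'.2 ∧
    ∀ i < n + 1, (chainGraph Q).Adj (c i) (c (i + 1))}

/-- `κ = max_{e' ∈ E} (1/c(e')) ∑_{e ∈ E} c(e) r^{-d(e,e')}`. -/
def kappa (π : X → ℝ) (Q : X → X → ℝ) (r : ℝ) : ℝ :=
  sSup {k : ℝ | ∃ e' ∈ edges Q, k = (1 / edgeWeight π Q e') *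
    ∑ e ∈ edges Q, edgeWeight π Q e * r ^ (-(edgeDist Q e e' : ℤ))}

/-- `H(w) = ((√w + 1)/(√w - 1)) log w` for `w ≠ 1`, and `H(1) = 4`. -/
def Hfun (w : ℝ) : ℝ :=
  if w = 1 then 4 else ((Real.sqrt w + 1) / (Real.sqrt w - 1)) * Real.log w

/-- A function is `r`-regular if `f(x) ≤ r f(y)` across every edge. -/
def IsRRegular (Q : X → X → ℝ) (r : ℝ) (f : X → ℝ) : Prop :=
  ∀ x y : X, x ≠ y → 0 < Q x y → f x ≤ r * f y

/-- Maximum degree of the graph `(X, E)`. -/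
def maxDegree (Q : X → X → ℝ) : ℕ :=
  univ.sup (fun x : X => Nat.card {y : X // (chainGraph Q).Adj x y})

/-- Irreducibility: every state can be reached from every other through allowed
transitions. -/
def MarkovIrreducible (Q : X → X → ℝ) : Prop :=
  ∀ x y : X, Relation.ReflTransGen (fun a b => a ≠ b ∧ 0 < Q a b) x y

theorem abs_log_one_add_sub_le {u : ℝ} (hu : |u| ≤ 1 / 2) :
    |Real.log (1 + u) - u| ≤ 2 * u ^ 2 := by
  have h := Real.abs_log_sub_add_sum_range_le (x := -u) (by rw [abs_neg]; linarith) 1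
  rw [sum_range_one, abs_neg, sub_neg_eq_add] at h
  calc |Real.log (1 + u) - u| = |(-u) ^ (0 + 1) / ((0 : ℕ) + 1) + Real.log (1 + u)| := by
        congr 1; push_cast; ring
    _ ≤ |u| ^ (1 + 1) / (1 - |u|) := h
    _ ≤ 2 * u ^ 2 := by
        rw [div_le_iff₀ (by linarith), sq_abs]
        nlinarith [sq_nonneg u]

theorem abs_one_add_mul_log_one_add_sub_le {u : ℝ} (hu : |u| ≤ 1 / 2) :
    |(1 + u) * Real.log (1 + u) - u - u ^ 2 / 2| ≤ 4 * |u| ^ 3 := by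
  have h := Real.abs_log_sub_add_sum_range_le (x := -u) (by rw [abs_neg]; linarith) 2
  rw [abs_neg, sub_neg_eq_add] at h
  have hlog : |Real.log (1 + u) - u + u ^ 2 / 2| ≤ 2 * |u| ^ 3 :=
    calc |Real.log (1 + u) - u + u ^ 2 / 2|
        = |∑ i ∈ range 2, (-u) ^ (i + 1) / (i + 1) + Real.log (1 + u)| := by
          simp only [sum_range_succ, sum_range_zero]; congr 1; ring
      _ ≤ |u| ^ (2 + 1) / (1 - |u|) := h
      _ ≤ 2 * |u| ^ 3 := by
          rw [div_le_iff₀ (by linarith), pow_succ]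
          nlinarith [mul_le_mul_of_nonneg_left hu (pow_nonneg (abs_nonneg u) 3)]
  have h1u : |1 + u| ≤ 3 / 2 := by
    rw [abs_le] at hu ⊢; constructor <;> linarith
  calc |(1 + u) * Real.log (1 + u) - u - u ^ 2 / 2|
      = |(1 + u) * (Real.log (1 + u) - u + u ^ 2 / 2) + -(u ^ 3 / 2)| := by congr 1; ring
    _ ≤ |1 + u| * |Real.log (1 + u) - u + u ^ 2 / 2| + |u| ^ 3 / 2 := by
        grw [abs_add_le, abs_mul, abs_neg, abs_div, abs_pow, abs_two]
    _ ≤ 3 / 2 * (2 * |u| ^ 3) + |u| ^ 3 / 2 := by gcongr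
    _ ≤ 4 * |u| ^ 3 := by linarith [pow_nonneg (abs_nonneg u) 3]

open Filter Topology in
theorem le_of_forall_pos_lt_le_add_mul {a b C ε₀ : ℝ} (hε₀ : 0 < ε₀)
    (h : ∀ ε, 0 < ε → ε < ε₀ → a ≤ b + ε * C) : a ≤ b := by
  have hlim : Tendsto (fun ε => b + ε * C) (𝓝[>] 0) (𝓝 b) := by
    have : Tendsto (fun ε : ℝ => b + ε * C) (𝓝 0) (𝓝 (b + 0 * C)) :=
      tendsto_const_nhds.add (tendsto_id.mul tendsto_const_nhds)
    simpa using this.mono_left nhdsWithin_le_nhds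
  refine ge_of_tendsto hlim ?_
  filter_upwards [Ioo_mem_nhdsGT hε₀] with ε hε using h ε hε.1 hε.2

section MarkovChain

variable {Ω : Type*} [Fintype Ω] {π : Ω → ℝ}

theorem mean_add (f g : Ω → ℝ) : mean π (fun x => f x + g x) = mean π f + mean π g := by
  simp only [mean, mul_add, sum_add_distrib]

theorem mean_sub (f g : Ω → ℝ) : mean π (fun x => f x - g x) = mean π f - mean π g := by
  simp only [mean, mul_sub, sum_sub_distrib]

theorem mean_const_mul (c : ℝ) (f : Ω → ℝ) : mean π (fun x => c * f x) = c * mean π f := by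
  simp only [mean, mul_sum, mul_left_comm]

theorem mean_const (hπsum : ∑ x, π x = 1) (c : ℝ) : mean π (fun _ => c) = c := by
  rw [mean, ← sum_mul, hπsum, one_mul]

theorem abs_mean_le (hπ : ∀ x, 0 ≤ π x) (hπsum : ∑ x, π x = 1) {f : Ω → ℝ} {c : ℝ}
    (hf : ∀ x, |f x| ≤ c) : |mean π f| ≤ c :=
  calc |mean π f| ≤ ∑ x, |π x * f x| := abs_sum_le_sum_abs _ _
    _ ≤ ∑ x, π x * c := sum_le_sum fun x _ => by
        rw [abs_mul, abs_of_nonneg (hπ x)]; exact mul_le_mul_of_nonneg_left (hf x) (hπ x)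
    _ = c := by rw [← sum_mul, hπsum, one_mul]

theorem variance_sub_const (hπsum : ∑ x, π x = 1) (f : Ω → ℝ) (c : ℝ) :
    variance π (fun x => f x - c) = variance π f := by
  have hsq : mean π (fun x => (f x - c) ^ 2)
      = mean π (fun x => f x ^ 2) - 2 * c * mean π f + c ^ 2 := by
    rw [← mean_const_mul, ← mean_sub, ← mean_const hπsum (c ^ 2), ← mean_add]
    congr 1; ext x; ring
  rw [variance, variance, hsq, mean_sub, mean_const hπsum]
  ring

theorem variance_eq_mean_sq_of_mean_eq_zero {g : Ω → ℝ} (hg : mean π g = 0) :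
    variance π g = mean π (fun x => g x ^ 2) := by
  rw [variance, hg, zero_pow two_ne_zero, sub_zero]

variable {Q : Ω → Ω → ℝ}

theorem dirichletForm_comm (f g : Ω → ℝ) : dirichletForm π Q f g = dirichletForm π Q g f := by
  simp only [dirichletForm, mul_right_comm _ (f _ - f _)]

theorem dirichletForm_const_add_left (c : ℝ) (f g : Ω → ℝ) :
    dirichletForm π Q (fun x => c + f x) g = dirichletForm π Q f g := by
  simp only [dirichletForm, add_sub_add_left_eq_sub]

theorem dirichletForm_sub_const_left (c : ℝ) (f g : Ω → ℝ) :
    dirichletForm π Q (fun x => f x - c) g = dirichletForm π Q f g := by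
  simp only [dirichletForm, sub_sub_sub_cancel_right]

theorem dirichletForm_sub_right (f g g' : Ω → ℝ) :
    dirichletForm π Q f (fun x => g x - g' x)
      = dirichletForm π Q f g - dirichletForm π Q f g' := by
  simp only [dirichletForm, ← mul_sub, ← sum_sub_distrib]
  congr 1; refine sum_congr rfl fun x _ => sum_congr rfl fun y _ => ?_; ring

theorem dirichletForm_const_mul (a b : ℝ) (f g : Ω → ℝ) :
    dirichletForm π Q (fun x => a * f x) (fun x => b * g x) = a * b * dirichletForm π Q f g := by
  simp only [dirichletForm, mul_sum]
  refine sum_congr rfl fun x _ => sum_congr rfl fun y _ => ?_; ring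

theorem abs_dirichletForm_le {f g : Ω → ℝ} {a b : ℝ} (hf : ∀ x, |f x| ≤ a)
    (hg : ∀ x, |g x| ≤ b) :
    |dirichletForm π Q f g| ≤ 2 * a * b * ∑ x, ∑ y, |π x * Q x y| := by
  have hdiff : ∀ {u : Ω → ℝ} {c : ℝ}, (∀ x, |u x| ≤ c) → ∀ x y, |u x - u y| ≤ 2 * c :=
    fun hu x y => (abs_sub _ _).trans (by linarith [hu x, hu y])
  have hterm : ∀ x y, |π x * Q x y * (f x - f y) * (g x - g y)|
      ≤ |π x * Q x y| * (2 * a) * (2 * b) := fun x y => by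
    have ha : 0 ≤ 2 * a := (abs_nonneg _).trans (hdiff hf x x)
    rw [abs_mul, abs_mul]
    exact mul_le_mul (mul_le_mul_of_nonneg_left (hdiff hf x y) (abs_nonneg _)) (hdiff hg x y)
      (abs_nonneg _) (mul_nonneg (abs_nonneg _) ha)
  calc |dirichletForm π Q f g|
      ≤ 1 / 2 * ∑ x, ∑ y, |π x * Q x y * (f x - f y) * (g x - g y)| := by
        rw [dirichletForm, abs_mul, abs_of_pos one_half_pos]
        gcongr
        exact (abs_sum_le_sum_abs _ _).trans (sum_le_sum fun x _ => abs_sum_le_sum_abs _ _)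
    _ ≤ 1 / 2 * ∑ x, ∑ y, |π x * Q x y| * (2 * a) * (2 * b) := by
        gcongr with x _ y _; exact hterm x y
    _ = 2 * a * b * ∑ x, ∑ y, |π x * Q x y| := by
        simp only [mul_sum]
        exact sum_congr rfl fun x _ => sum_congr rfl fun y _ => by ring

theorem abs_entropy_one_add_sub_le (hπ : ∀ x, 0 ≤ π x) (hπsum : ∑ x, π x = 1) {h : Ω → ℝ}
    {δ : ℝ} (hh : mean π h = 0) (hδ : δ ≤ 1 / 2) (hbound : ∀ x, |h x| ≤ δ) :
    |entropy π (fun x => 1 + h x) - mean π (fun x => h x ^ 2) / 2| ≤ 4 * δ ^ 3 := by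
  have hmean : mean π (fun x => 1 + h x) = 1 := by rw [mean_add, mean_const hπsum, hh, add_zero]
  have hexp : entropy π (fun x => 1 + h x) - mean π (fun x => h x ^ 2) / 2
      = mean π (fun x => (1 + h x) * Real.log (1 + h x) - h x - h x ^ 2 / 2) := by
    rw [mean_sub, mean_sub, hh, entropy, hmean, Real.log_one, mul_zero, sub_zero]
    simp only [mean, sum_div, mul_div_assoc]
  rw [hexp]
  refine abs_mean_le hπ hπsum fun x => (abs_one_add_mul_log_one_add_sub_le ?_).trans ?_
  · exact (hbound x).trans hδ
  · gcongr; exact hbound x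

theorem abs_dirichletForm_one_add_log_sub_le {h : Ω → ℝ} {δ : ℝ} (hδ : δ ≤ 1 / 2)
    (hbound : ∀ x, |h x| ≤ δ) :
    |dirichletForm π Q (fun x => 1 + h x) (fun x => Real.log (1 + h x)) - dirichletForm π Q h h|
      ≤ 4 * δ ^ 3 * ∑ x, ∑ y, |π x * Q x y| := by
  have hlog : ∀ x, |Real.log (1 + h x) - h x| ≤ 2 * δ ^ 2 := fun x =>
    (abs_log_one_add_sub_le ((hbound x).trans hδ)).trans <| by
      linarith [sq_le_sq' (abs_le.mp (hbound x)).1 (abs_le.mp (hbound x)).2]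
  rw [dirichletForm_const_add_left, ← dirichletForm_sub_right]
  calc _ ≤ 2 * δ * (2 * δ ^ 2) * ∑ x, ∑ y, |π x * Q x y| := abs_dirichletForm_le hbound hlog
    _ = _ := by ring

theorem variance_le_two_mul_dirichletForm_of_mean_eq_zero (hπ : ∀ x, 0 ≤ π x)
    (hπsum : ∑ x, π x = 1) {t : ℝ} (ht : 0 ≤ t) (hMLS : ∀ f : Ω → ℝ, (∀ x, 0 < f x) →
      entropy π f ≤ t * dirichletForm π Q f (fun x => Real.log (f x)))
    {g : Ω → ℝ} (hg : mean π g = 0) : variance π g ≤ 2 * t * dirichletForm π Q g g := by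
  obtain ⟨M₀, hM₀⟩ := Finite.exists_le fun x => |g x|
  set M := max M₀ 1
  have hM : 0 < M := lt_max_of_lt_right one_pos
  have hgM : ∀ x, |g x| ≤ M := fun x => (hM₀ x).trans (le_max_left _ _)
  set V := mean π (fun x => g x ^ 2)
  set D := dirichletForm π Q g g
  set S := ∑ x, ∑ y, |π x * Q x y|
  have hsmall : ∀ ε, 0 < ε → ε < 1 / (2 * M) →
      V / 2 ≤ t * D + ε * (4 * M ^ 3 * (1 + t * S)) := by
    intro ε hε hεM
    have hδ : ε * M ≤ 1 / 2 := by rw [lt_div_iff₀ (by positivity)] at hεM; linarith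
    have hbound : ∀ x, |ε * g x| ≤ ε * M := fun x => by
      rw [abs_mul, abs_of_pos hε]; exact mul_le_mul_of_nonneg_left (hgM x) hε.le
    have hpos : ∀ x, 0 < 1 + ε * g x := fun x => by
      linarith [(abs_le.mp ((hbound x).trans hδ)).1]
    have hEnt :=
      abs_entropy_one_add_sub_le hπ hπsum (by rw [mean_const_mul, hg, mul_zero]) hδ hbound
    have hDir := abs_dirichletForm_one_add_log_sub_le (π := π) (Q := Q) hδ hbound
    simp only [mul_pow, mean_const_mul] at hEnt
    rw [dirichletForm_const_mul] at hDir
    have hscaled : ε ^ 2 * (V / 2) ≤ ε ^ 2 * (t * D + ε * (4 * M ^ 3 * (1 + t * S))) := by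
      linarith [(abs_le.mp hEnt).1, hMLS _ hpos, mul_le_mul_of_nonneg_left (abs_le.mp hDir).2 ht]
    exact le_of_mul_le_mul_left hscaled (by positivity)
  rw [variance_eq_mean_sq_of_mean_eq_zero hg]
  linarith [le_of_forall_pos_lt_le_add_mul (by positivity) hsmall]

end MarkovChain

theorem mlsi_implies_poincare_general
    (π : X → ℝ) (Q : X → X → ℝ)
    (hπpos : ∀ x : X, 0 < π x)
    (hπsum : ∑ x : X, π x = 1)
    (t : ℝ) (ht : 0 < t)
    (hMLS : ∀ f : X → ℝ, (∀ x, 0 < f x) →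
      entropy π f ≤ t * dirichletForm π Q f (fun x => Real.log (f x))) :
     ∀ f : X → ℝ, (∀ x, 0 < f x) →
      variance π f ≤ 2 * t * dirichletForm π Q f f := by
  intro f _
  have hmean : mean π (fun x => f x - mean π f) = 0 := by
    rw [mean_sub, mean_const hπsum, sub_self]
  calc variance π f = variance π (fun x => f x - mean π f) := (variance_sub_const hπsum f _).symm
    _ ≤ 2 * t * dirichletForm π Q (fun x => f x - mean π f) (fun x => f x - mean π f) :=
        variance_le_two_mul_dirichletForm_of_mean_eq_zero (fun x => (hπpos x).le) hπsum ht.le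
          hMLS hmean
    _ = 2 * t * dirichletForm π Q f f := by
        rw [dirichletForm_sub_const_left, dirichletForm_comm, dirichletForm_sub_const_left]

theorem mlsi_implies_poincare
    (π : X → ℝ) (Q : X → X → ℝ)
    (hQ : ∀ x y : X, x ≠ y → 0 ≤ Q x y)
    (hQsum : ∀ x : X, ∑ y : X, Q x y = 0)
    (hirr : MarkovIrreducible Q)
    (hπpos : ∀ x : X, 0 < π x)
    (hπsum : ∑ x : X, π x = 1)
    (hrev : ∀ x y : X, π x * Q x y = π y * Q y x)
    (t : ℝ) (ht : 0 < t)
    (hMLS : ∀ f : X → ℝ, (∀ x, 0 < f x) →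
      entropy π f ≤ t * dirichletForm π Q f (fun x => Real.log (f x))) :
     ∀ f : X → ℝ, (∀ x, 0 < f x) →
      variance π f ≤ 2 * t * dirichletForm π Q f f :=
  mlsi_implies_poincare_general π Q hπpos hπsum t ht hMLS
end
end

section
/- If t > 0 is such that the log-Sobolev inequality Ent(f) ≤ t·E(√f, √f) holds for every function f : X → (0,∞), then the modified log-Sobolev inequality Ent(f) ≤ (t/4)·E(f, log f) holds for every function f : X → (0,∞). Equivalently, t_MLS ≤ t_LS/4. -/
open Finset

noncomputable section

variable {X : Type*} [Fintype X] [DecidableEq X] [Nonempty X]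

/-!
The log-Sobolev inequality bounds `Ent(f)` by `t E(√f, √f)`, so it suffices to compare the two
Dirichlet forms edge by edge: `4 (√a - √b)² ≤ (a - b)(log a - log b)` for `a, b > 0`. Writing
`a = u²`, `b = v²`, this is the inequality `2 (u - v) ≤ (u + v)(log u - log v)` between the
logarithmic and arithmetic means of `u` and `v`; it follows by keeping only the first term of the
series `log (1 + y) - log (1 - y) = 2 ∑ y^(2k+1) / (2k+1)` at `y = (u - v)/(u + v)`.
-/

lemma two_mul_le_log_one_add_sub_log_one_sub {y : ℝ} (hy₀ : 0 ≤ y) (hy₁ : y < 1) :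
    2 * y ≤ Real.log (1 + y) - Real.log (1 - y) := by
  have hsum := Real.hasSum_log_sub_log_of_abs_lt_one (abs_lt.mpr ⟨by linarith, hy₁⟩)
  simpa using le_hasSum hsum 0 fun k _ => by positivity

lemma two_mul_sub_le_add_mul_log_sub_log {u v : ℝ} (hv : 0 < v) (hvu : v ≤ u) :
    2 * (u - v) ≤ (u + v) * (Real.log u - Real.log v) := by
  have huv : 0 < u + v := by linarith
  have hy := two_mul_le_log_one_add_sub_log_one_sub (y := (u - v) / (u + v))
    (div_nonneg (by linarith) huv.le) ((div_lt_one huv).mpr (by linarith))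
  have h_add : 1 + (u - v) / (u + v) = 2 * u / (u + v) := by field_simp; ring
  have h_sub : 1 - (u - v) / (u + v) = 2 * v / (u + v) := by field_simp; ring
  have hu : 0 < u := hv.trans_le hvu
  rw [h_add, h_sub, Real.log_div (by positivity) huv.ne', Real.log_div (by positivity) huv.ne',
    Real.log_mul two_ne_zero hu.ne', Real.log_mul two_ne_zero hv.ne'] at hy
  calc 2 * (u - v) = (u + v) * (2 * ((u - v) / (u + v))) := by field_simp
    _ ≤ (u + v) * (Real.log u - Real.log v) := by gcongr; linarith

lemma four_mul_sqrt_sub_sqrt_sq_le {a b : ℝ} (ha : 0 < a) (hb : 0 < b) :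
    4 * (√a - √b) ^ 2 ≤ (a - b) * (Real.log a - Real.log b) := by
  wlog hba : b ≤ a generalizing a b
  · linarith [this hb ha (le_of_not_ge hba)]
  obtain ⟨u, hu, rfl⟩ : ∃ u, 0 < u ∧ u ^ 2 = a := ⟨√a, Real.sqrt_pos.mpr ha, Real.sq_sqrt ha.le⟩
  obtain ⟨v, hv, rfl⟩ : ∃ v, 0 < v ∧ v ^ 2 = b := ⟨√b, Real.sqrt_pos.mpr hb, Real.sq_sqrt hb.le⟩
  have hvu : v ≤ u := (pow_le_pow_iff_left₀ hv.le hu.le two_ne_zero).mp hba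
  have hmean := two_mul_sub_le_add_mul_log_sub_log hv hvu
  rw [Real.sqrt_sq hu.le, Real.sqrt_sq hv.le, Real.log_pow, Real.log_pow]
  push_cast
  nlinarith [mul_le_mul_of_nonneg_left hmean (sub_nonneg.mpr hvu)]

lemma dirichletForm_sqrt_le {Ω : Type*} [Fintype Ω] {π : Ω → ℝ} {Q : Ω → Ω → ℝ}
    (hπ : ∀ x, 0 ≤ π x) (hQ : ∀ x y, x ≠ y → 0 ≤ Q x y) {f : Ω → ℝ} (hf : ∀ x, 0 < f x) :
    dirichletForm π Q (fun x => √(f x)) (fun x => √(f x)) ≤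
      1 / 4 * dirichletForm π Q f (fun x => Real.log (f x)) := by
  simp only [dirichletForm, mul_sum]
  refine sum_le_sum fun x _ => sum_le_sum fun y _ => ?_
  obtain rfl | hxy := eq_or_ne x y
  · simp
  have hkey := four_mul_sqrt_sub_sqrt_sq_le (hf x) (hf y)
  have hw : 0 ≤ π x * Q x y := mul_nonneg (hπ x) (hQ x y hxy)
  nlinarith [mul_le_mul_of_nonneg_left hkey hw]

theorem lsi_implies_mlsi_general
    (π : X → ℝ) (Q : X → X → ℝ)
    (hQ : ∀ x y : X, x ≠ y → 0 ≤ Q x y)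
    (hπpos : ∀ x : X, 0 < π x)
    (t : ℝ) (ht : 0 < t)
    (hLS : ∀ f : X → ℝ, (∀ x, 0 < f x) →
      entropy π f ≤ t * dirichletForm π Q (fun x => Real.sqrt (f x)) (fun x => Real.sqrt (f x))) :
     ∀ f : X → ℝ, (∀ x, 0 < f x) →
      entropy π f ≤ (t / 4) * dirichletForm π Q f (fun x => Real.log (f x)) := by
  intro f hf
  calc entropy π f ≤ t * dirichletForm π Q (fun x => √(f x)) (fun x => √(f x)) := hLS f hf
    _ ≤ t * (1 / 4 * dirichletForm π Q f (fun x => Real.log (f x))) := by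
      gcongr
      exact dirichletForm_sqrt_le (fun x => (hπpos x).le) hQ hf
    _ = t / 4 * dirichletForm π Q f (fun x => Real.log (f x)) := by ring

theorem lsi_implies_mlsi
    (π : X → ℝ) (Q : X → X → ℝ)
    (hQ : ∀ x y : X, x ≠ y → 0 ≤ Q x y)
    (hQsum : ∀ x : X, ∑ y : X, Q x y = 0)
    (hirr : MarkovIrreducible Q)
    (hπpos : ∀ x : X, 0 < π x)
    (hπsum : ∑ x : X, π x = 1)
    (hrev : ∀ x y : X, π x * Q x y = π y * Q y x)
    (t : ℝ) (ht : 0 < t)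
    (hLS : ∀ f : X → ℝ, (∀ x, 0 < f x) →
      entropy π f ≤ t * dirichletForm π Q (fun x => Real.sqrt (f x)) (fun x => Real.sqrt (f x))) :
     ∀ f : X → ℝ, (∀ x, 0 < f x) →
      entropy π f ≤ (t / 4) * dirichletForm π Q f (fun x => Real.log (f x)) :=
  lsi_implies_mlsi_general π Q hQ hπpos t ht hLS

end
end

section
/- For all real numbers u, v > 0, one has 4(√u − √v)² ≤ (u − v)·log(u/v). -/
open Finset

noncomputable section

variable {X : Type*} [Fintype X] [DecidableEq X] [Nonempty X]

/-! Put `a = √u`, `b = √v` and `x = (a - b) / (a + b)`, so that `a / b = (1 + x) / (1 - x)`.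
Multiplying the series `log (1 + x) - log (1 - x) = 2 ∑ x ^ (2k+1) / (2k+1)` by `x` gives a series
of even powers with nonnegative coefficients, hence `x (log (1 + x) - log (1 - x)) ≥ 2 x²`;
clearing denominators this is `2 (a - b)² ≤ (a² - b²) log (a / b)`, and `log (u / v) = 2 log (a / b)`. -/

open Real

theorem two_mul_sq_le_mul_log_sub_log {x : ℝ} (hx : |x| < 1) :
    2 * x ^ 2 ≤ x * (log (1 + x) - log (1 - x)) := by
  have hsum := (hasSum_log_sub_log_of_abs_lt_one hx).mul_left x
  have hterm : ∀ k : ℕ, x * (2 * (1 / (2 * k + 1)) * x ^ (2 * k + 1)) =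
      2 / (2 * k + 1) * (x ^ (k + 1)) ^ 2 := fun k => by ring
  simp only [hterm] at hsum
  simpa using le_hasSum hsum 0 fun k _ => by positivity

theorem two_mul_sq_sub_le_sq_sub_sq_mul_log_div {a b : ℝ} (ha : 0 < a) (hb : 0 < b) :
    2 * (a - b) ^ 2 ≤ (a ^ 2 - b ^ 2) * log (a / b) := by
  have hab : 0 < a + b := add_pos ha hb
  have hx : |(a - b) / (a + b)| < 1 := by
    rw [abs_div, abs_of_pos hab, div_lt_one hab, abs_lt]
    constructor <;> linarith
  have key := two_mul_sq_le_mul_log_sub_log hx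
  have h_add : 1 + (a - b) / (a + b) = 2 * a / (a + b) := by field_simp; ring
  have h_sub : 1 - (a - b) / (a + b) = 2 * b / (a + b) := by field_simp; ring
  rw [h_add, h_sub, ← log_div (by positivity) (by positivity),
    show 2 * a / (a + b) / (2 * b / (a + b)) = a / b by field_simp] at key
  calc 2 * (a - b) ^ 2 = (a + b) ^ 2 * (2 * ((a - b) / (a + b)) ^ 2) := by field_simp
    _ ≤ (a + b) ^ 2 * ((a - b) / (a + b) * log (a / b)) :=
      mul_le_mul_of_nonneg_left key (sq_nonneg _)
    _ = (a ^ 2 - b ^ 2) * log (a / b) := by field_simp; ring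

theorem four_sq_sqrt_le (u v : ℝ) (hu : 0 < u) (hv : 0 < v) :
    4 * (Real.sqrt u - Real.sqrt v) ^ 2 ≤ (u - v) * Real.log (u / v) := by
  have key := two_mul_sq_sub_le_sq_sub_sq_mul_log_div (sqrt_pos.2 hu) (sqrt_pos.2 hv)
  rw [sq_sqrt hu.le, sq_sqrt hv.le] at key
  have hquot : u / v = (√u / √v) ^ 2 := by rw [div_pow, sq_sqrt hu.le, sq_sqrt hv.le]
  rw [hquot, log_pow]
  push_cast
  linarith

end
end

section
/- For any function f : X → (0,∞), one has 4·E(√f, √f) ≤ E(f, log f). -/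
open Finset

noncomputable section

variable {X : Type*} [Fintype X] [DecidableEq X] [Nonempty X]

/-!
The inequality holds term by term in the Dirichlet form: for `a = s ^ 2`, `b = u ^ 2` the
pointwise bound `4 (√a - √b) ^ 2 ≤ (a - b) (log a - log b)` says that the logarithmic mean of
`s` and `u` is at most their arithmetic mean, which is the first term of the series of
`log ((1 + x) / (1 - x))` at `x = (s - u) / (s + u)`.
-/

section DirichletForm

variable {α : Type*} [Fintype α] (π : α → ℝ) (Q : α → α → ℝ)

theorem dirichletForm_const_mul_left (c : ℝ) (f g : α → ℝ) :
    dirichletForm π Q (fun x => c * f x) g = c * dirichletForm π Q f g := by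
  simp only [dirichletForm, mul_sum]
  exact sum_congr rfl fun x _ => sum_congr rfl fun y _ => by ring

variable {π Q}

theorem dirichletForm_le_dirichletForm (hπQ : ∀ x y, x ≠ y → 0 ≤ π x * Q x y)
    {f g f' g' : α → ℝ}
    (h : ∀ x y, (f x - f y) * (g x - g y) ≤ (f' x - f' y) * (g' x - g' y)) :
    dirichletForm π Q f g ≤ dirichletForm π Q f' g' := by
  refine mul_le_mul_of_nonneg_left (sum_le_sum fun x _ => sum_le_sum fun y _ => ?_) (by norm_num)
  rcases eq_or_ne x y with rfl | hxy
  · simp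
  · simpa only [mul_assoc] using mul_le_mul_of_nonneg_left (h x y) (hπQ x y hxy)

end DirichletForm

namespace Real

theorem two_mul_sq_le_mul_log_one_add_sub_log_one_sub {x : ℝ} (hx : |x| < 1) :
    2 * x ^ 2 ≤ x * (log (1 + x) - log (1 - x)) := by
  have hsum := (hasSum_log_sub_log_of_abs_lt_one hx).mul_left x
  have hterm : ∀ k : ℕ, x * (2 * (1 / (2 * k + 1)) * x ^ (2 * k + 1)) =
      2 / (2 * k + 1) * (x ^ (k + 1)) ^ 2 := fun k => by ring
  simp only [hterm] at hsum
  simpa using le_hasSum hsum 0 fun k _ => by positivity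

theorem two_mul_sq_sub_le_mul_log_sub {s u : ℝ} (hs : 0 < s) (hu : 0 < u) :
    2 * (s - u) ^ 2 ≤ (s ^ 2 - u ^ 2) * (log s - log u) := by
  have hsu : 0 < s + u := by positivity
  have hx : |(s - u) / (s + u)| < 1 := by
    rw [abs_lt, lt_div_iff₀ hsu, div_lt_iff₀ hsu]
    constructor <;> linarith
  have hlog : log (1 + (s - u) / (s + u)) - log (1 - (s - u) / (s + u)) = log s - log u := by
    have h1 : 1 + (s - u) / (s + u) = 2 * s / (s + u) := by field_simp; ring
    have h2 : 1 - (s - u) / (s + u) = 2 * u / (s + u) := by field_simp; ring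
    rw [h1, h2, log_div, log_div, log_mul, log_mul] <;> first | positivity | ring
  have key := two_mul_sq_le_mul_log_one_add_sub_log_one_sub hx
  rw [hlog] at key
  calc 2 * (s - u) ^ 2 = (s + u) ^ 2 * (2 * ((s - u) / (s + u)) ^ 2) := by field_simp
    _ ≤ (s + u) ^ 2 * ((s - u) / (s + u) * (log s - log u)) := by gcongr
    _ = (s ^ 2 - u ^ 2) * (log s - log u) := by field_simp; ring

theorem four_mul_sq_sqrt_sub_le_mul_log_sub {a b : ℝ} (ha : 0 < a) (hb : 0 < b) :
    4 * (√a - √b) ^ 2 ≤ (a - b) * (log a - log b) := by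
  have key := two_mul_sq_sub_le_mul_log_sub (sqrt_pos.2 ha) (sqrt_pos.2 hb)
  rw [sq_sqrt ha.le, sq_sqrt hb.le, log_sqrt ha.le, log_sqrt hb.le] at key
  linarith

end Real

theorem lsi_form_le_mlsi_form_general
    (π : X → ℝ) (Q : X → X → ℝ)
    (hQ : ∀ x y : X, x ≠ y → 0 ≤ Q x y)
    (hπpos : ∀ x : X, 0 < π x)
    (f : X → ℝ) (hf : ∀ x, 0 < f x) :
     4 * dirichletForm π Q (fun x => Real.sqrt (f x)) (fun x => Real.sqrt (f x)) ≤
      dirichletForm π Q f (fun x => Real.log (f x)) := by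
  rw [← dirichletForm_const_mul_left]
  refine dirichletForm_le_dirichletForm (fun x y hxy => mul_nonneg (hπpos x).le (hQ x y hxy))
    fun x y => ?_
  have := Real.four_mul_sq_sqrt_sub_le_mul_log_sub (hf x) (hf y)
  linarith

theorem lsi_form_le_mlsi_form
    (π : X → ℝ) (Q : X → X → ℝ)
    (hQ : ∀ x y : X, x ≠ y → 0 ≤ Q x y)
    (hQsum : ∀ x : X, ∑ y : X, Q x y = 0)
    (hirr : MarkovIrreducible Q)
    (hπpos : ∀ x : X, 0 < π x)
    (hπsum : ∑ x : X, π x = 1)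
    (hrev : ∀ x y : X, π x * Q x y = π y * Q y x)
    (f : X → ℝ) (hf : ∀ x, 0 < f x) :
     4 * dirichletForm π Q (fun x => Real.sqrt (f x)) (fun x => Real.sqrt (f x)) ≤
      dirichletForm π Q f (fun x => Real.log (f x)) :=
  lsi_form_le_mlsi_form_general π Q hQ hπpos f hf

end
end

section
/- (Exploiting regularity) Let r ≥ 1. If f : X → (0,∞) is r-regular, i.e. f(x) ≤ r·f(y) for all (x,y) ∈ E, then E(f, log f) ≤ H(r)·E(√f, √f), where H(r) := ((√r + 1)/(√r − 1))·log r for r > 1 and H(1) := 4. -/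
open Finset

noncomputable section

variable {X : Type*} [Fintype X] [DecidableEq X] [Nonempty X]

/-! The ratio `(a - b)(log a - log b) / (√a - √b)²` equals `2 (u + 1) log u / (u - 1)` with
`u = √(a/b)`, and `r`-regularity confines `u` to `[1, √r]` on every edge. This ratio is increasing
in `u` (its derivative has the sign of `u - u⁻¹ - 2 log u ≥ 0`), so it is bounded by its value
`H(r)` at `u = √r`; summing the edge-wise bound against the weights `π(x) Q(x,y)` gives the
theorem. -/

section RealInequalities

open Real

theorem Real.two_mul_log_le_sub_inv {w : ℝ} (hw : 1 ≤ w) : 2 * log w ≤ w - w⁻¹ := by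
  have h := Real.self_le_sinh_iff.mpr (log_nonneg hw)
  rw [sinh_log (by linarith)] at h
  linarith

theorem monotoneOn_add_one_mul_log_div_sub_one :
    MonotoneOn (fun u : ℝ => (u + 1) * log u / (u - 1)) (Set.Ioi 1) := by
  have hderiv : ∀ u ∈ Set.Ioi (1 : ℝ), HasDerivAt (fun u => (u + 1) * log u / (u - 1))
      (((log u + (u + 1) / u) * (u - 1) - (u + 1) * log u * 1) / (u - 1) ^ 2) u := by
    intro u (hu : 1 < u)
    have hnum : HasDerivAt (fun u : ℝ => (u + 1) * log u) (log u + (u + 1) / u) u := by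
      refine (((hasDerivAt_id u).add_const 1).mul (hasDerivAt_log (by positivity))).congr_deriv ?_
      simp [div_eq_mul_inv]
    exact hnum.div ((hasDerivAt_id u).sub_const 1) (sub_ne_zero.mpr hu.ne')
  refine monotoneOn_of_deriv_nonneg (convex_Ioi 1)
    (fun u hu => (hderiv u hu).continuousAt.continuousWithinAt) ?_ ?_
  · rw [interior_Ioi]
    exact fun u hu => (hderiv u hu).differentiableAt.differentiableWithinAt
  · rw [interior_Ioi]
    intro u (hu : 1 < u)
    rw [(hderiv u hu).deriv]
    have hnum : (log u + (u + 1) / u) * (u - 1) - (u + 1) * log u * 1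
        = (u - u⁻¹) - 2 * log u := by
      field_simp
      ring
    rw [hnum]
    exact div_nonneg (sub_nonneg.mpr (two_mul_log_le_sub_inv hu.le)) (sq_nonneg _)

theorem Hfun_eq_of_one_lt {r : ℝ} (hr : 1 < r) :
    Hfun r = 2 * ((√r + 1) * log √r / (√r - 1)) := by
  rw [Hfun, if_neg hr.ne', log_sqrt (by linarith)]
  ring

theorem two_mul_add_one_mul_log_le_Hfun_mul {r u : ℝ} (hu : 1 ≤ u) (hur : u ≤ √r) :
    2 * (u + 1) * log u ≤ Hfun r * (u - 1) := by
  obtain rfl | hu := hu.eq_or_lt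
  · simp
  have hsqrt : 1 < √r := hu.trans_le hur
  have hr : 1 < r := by simpa using (lt_sqrt zero_le_one).mp hsqrt
  have hmono := monotoneOn_add_one_mul_log_div_sub_one (Set.mem_Ioi.mpr hu)
    (Set.mem_Ioi.mpr hsqrt) hur
  rw [Hfun_eq_of_one_lt hr]
  have hu1 : 0 < u - 1 := by linarith
  calc 2 * (u + 1) * log u = 2 * ((u + 1) * log u / (u - 1)) * (u - 1) := by field_simp
    _ ≤ 2 * ((√r + 1) * log √r / (√r - 1)) * (u - 1) := by gcongr

theorem sub_mul_log_sub_log_le_Hfun_mul_sq_of_le {r a b : ℝ} (hb : 0 < b) (hba : b ≤ a)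
    (hab : a ≤ r * b) :
    (a - b) * (log a - log b) ≤ Hfun r * (√a - √b) ^ 2 := by
  have ht : 0 < √b := sqrt_pos.mpr hb
  have hs : 0 < √a := sqrt_pos.mpr (hb.trans_le hba)
  have hst : √b ≤ √a := sqrt_le_sqrt hba
  have hu : 1 ≤ √a / √b := (one_le_div ht).mpr hst
  have hur : √a / √b ≤ √r := by
    rw [div_le_iff₀ ht, ← sqrt_mul' _ hb.le]
    exact sqrt_le_sqrt hab
  have hlog : log a - log b = 2 * log (√a / √b) := by
    rw [log_div hs.ne' ht.ne', log_sqrt (hb.trans_le hba).le, log_sqrt hb.le]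
    ring
  have hkey := mul_le_mul_of_nonneg_right (two_mul_add_one_mul_log_le_Hfun_mul hu hur)
    (mul_nonneg ht.le (sub_nonneg.mpr hst))
  have hlhs : (a - b) * (log a - log b) =
      2 * (√a / √b + 1) * log (√a / √b) * (√b * (√a - √b)) := by
    rw [hlog, ← sq_sqrt (hb.trans_le hba).le, ← sq_sqrt hb.le, sqrt_sq hs.le, sqrt_sq ht.le]
    field_simp
    ring
  have hrhs : Hfun r * (√a - √b) ^ 2 = Hfun r * (√a / √b - 1) * (√b * (√a - √b)) := by
    field_simp
  rw [hlhs, hrhs]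
  exact hkey

theorem sub_mul_log_sub_log_le_Hfun_mul_sq {r a b : ℝ} (ha : 0 < a) (hb : 0 < b)
    (hab : a ≤ r * b) (hba : b ≤ r * a) :
    (a - b) * (log a - log b) ≤ Hfun r * (√a - √b) ^ 2 := by
  rcases le_total b a with h | h
  · exact sub_mul_log_sub_log_le_Hfun_mul_sq_of_le hb h hab
  · have := sub_mul_log_sub_log_le_Hfun_mul_sq_of_le ha h hba
    linarith [show (a - b) * (log a - log b) = (b - a) * (log b - log a) by ring,
      show (√a - √b) ^ 2 = (√b - √a) ^ 2 by ring]

end RealInequalities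

theorem dirichletForm_le_mul_of_forall_edge {α : Type*} [Fintype α] {π : α → ℝ}
    {Q : α → α → ℝ} {f g h k : α → ℝ}
    {c : ℝ} (hπ : ∀ x, 0 ≤ π x) (hQ : ∀ x y, x ≠ y → 0 ≤ Q x y)
    (hedge : ∀ x y, x ≠ y → 0 < Q x y →
      (f x - f y) * (g x - g y) ≤ c * ((h x - h y) * (k x - k y))) :
    dirichletForm π Q f g ≤ c * dirichletForm π Q h k := by
  have hterm : ∀ x y, π x * Q x y * (f x - f y) * (g x - g y) ≤
      c * (π x * Q x y * (h x - h y) * (k x - k y)) := by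
    intro x y
    by_cases hxy : x = y
    · simp [hxy]
    obtain hpos | hzero := (hQ x y hxy).lt_or_eq
    · have := mul_le_mul_of_nonneg_left (hedge x y hxy hpos) (mul_nonneg (hπ x) hpos.le)
      linarith
    · simp [← hzero]
  calc dirichletForm π Q f g
      ≤ 1 / 2 * ∑ x, ∑ y, c * (π x * Q x y * (h x - h y) * (k x - k y)) :=
        mul_le_mul_of_nonneg_left (sum_le_sum fun x _ => sum_le_sum fun y _ => hterm x y)
          (by norm_num)
    _ = c * dirichletForm π Q h k := by
        simp only [dirichletForm, ← mul_sum]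
        ring

theorem pos_symm_of_reversible {α : Type*} {π : α → ℝ} {Q : α → α → ℝ} (hπ : ∀ x, 0 < π x)
    (hrev : ∀ x y, π x * Q x y = π y * Q y x) {x y : α} (hpos : 0 < Q x y) : 0 < Q y x := by
  have h : 0 < π y * Q y x := hrev x y ▸ mul_pos (hπ x) hpos
  exact pos_of_mul_pos_right h (hπ y).le

theorem exploiting_regularity_general
    (π : X → ℝ) (Q : X → X → ℝ)
    (hQ : ∀ x y : X, x ≠ y → 0 ≤ Q x y)
    (hπpos : ∀ x : X, 0 < π x)
    (hrev : ∀ x y : X, π x * Q x y = π y * Q y x)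
    (r : ℝ)
    (f : X → ℝ) (hf : ∀ x, 0 < f x) (hreg : IsRRegular Q r f) :
     dirichletForm π Q f (fun x => Real.log (f x)) ≤
      Hfun r * dirichletForm π Q (fun x => Real.sqrt (f x)) (fun x => Real.sqrt (f x)) := by
  refine dirichletForm_le_mul_of_forall_edge (fun x => (hπpos x).le) hQ fun x y hxy hpos => ?_
  have hyx := pos_symm_of_reversible hπpos hrev hpos
  rw [← sq]
  exact sub_mul_log_sub_log_le_Hfun_mul_sq (hf x) (hf y) (hreg x y hxy hpos)
    (hreg y x hxy.symm hyx)

theorem exploiting_regularity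
    (π : X → ℝ) (Q : X → X → ℝ)
    (hQ : ∀ x y : X, x ≠ y → 0 ≤ Q x y)
    (hQsum : ∀ x : X, ∑ y : X, Q x y = 0)
    (hirr : MarkovIrreducible Q)
    (hπpos : ∀ x : X, 0 < π x)
    (hπsum : ∑ x : X, π x = 1)
    (hrev : ∀ x y : X, π x * Q x y = π y * Q y x)
    (r : ℝ) (hr : 1 ≤ r)
    (f : X → ℝ) (hf : ∀ x, 0 < f x) (hreg : IsRRegular Q r f) :
     dirichletForm π Q f (fun x => Real.log (f x)) ≤
      Hfun r * dirichletForm π Q (fun x => Real.sqrt (f x)) (fun x => Real.sqrt (f x)) :=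
  exploiting_regularity_general π Q hQ hπpos hrev r f hf hreg

end
end

section
/- Let r ≥ 1, f : X → (0,∞), and f_⋆(x) := max_{z∈X} r^{−d(x,z)}·f(z). For each edge e = (x,y) ∈ E with f_⋆(x) ≤ f_⋆(y), there exists an edge e' = (x',y') ∈ E such that r^{−d(e,e')}·f(x') ≤ f_⋆(x) ≤ f_⋆(y) ≤ r^{−d(e,e')}·f(y'). -/
open Finset

noncomputable section

variable {X : Type*} [Fintype X] [DecidableEq X] [Nonempty X]

set_option linter.unusedSectionVars false

/-! Take `z` attaining the maximum defining `f⋆(y)` and a geodesic from `y` to `z`; with `x`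
prefixed it is a path from `e = (x, y)` to its last edge `e' = (x', z)`, of length `d(y, z) + 1`.
Hence `d(e, e') ≤ d(y, z)`, so `f⋆(y) = r^{-d(y,z)} f(z) ≤ r^{-d(e,e')} f(z)`. On the other hand
every path from `e` to `e'` joins `x` to `x'`, so `d(x, x') ≤ d(e, e')` and
`r^{-d(e,e')} f(x') ≤ r^{-d(x,x')} f(x') ≤ f⋆(x)`. Reversibility makes the last edge of the
undirected geodesic an edge of `E`. -/

theorem SimpleGraph.exists_walk_length_eq_of_adj_succ {V : Type*} {G : SimpleGraph V}
    (c : ℕ → V) (n : ℕ) (h : ∀ i < n, G.Adj (c i) (c (i + 1))) :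
    ∃ p : G.Walk (c 0) (c n), p.length = n := by
  induction n with
  | zero => exact ⟨.nil, rfl⟩
  | succ n ih =>
    obtain ⟨p, hp⟩ := ih fun i hi => h i (by omega)
    exact ⟨p.concat (h n n.lt_succ_self), by simp [hp]⟩

theorem SimpleGraph.dist_le_of_adj_succ {V : Type*} {G : SimpleGraph V}
    (c : ℕ → V) (n : ℕ) (h : ∀ i < n, G.Adj (c i) (c (i + 1))) :
    G.dist (c 0) (c n) ≤ n := by
  obtain ⟨p, hp⟩ := G.exists_walk_length_eq_of_adj_succ c n h
  exact (SimpleGraph.dist_le p).trans hp.le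

section

variable {Q : X → X → ℝ}

theorem chainGraph_preconnected (hirr : MarkovIrreducible Q) : (chainGraph Q).Preconnected :=
  fun a b => (SimpleGraph.reachable_iff_reflTransGen a b).mpr <|
    Relation.ReflTransGen.mono (fun _ _ h => ⟨h.1, Or.inl h.2⟩) a b (hirr a b)

theorem isEdge_of_chainGraph_adj {π : X → ℝ} (hπpos : ∀ x, 0 < π x)
    (hrev : ∀ x y, π x * Q x y = π y * Q y x) {a b : X} (h : (chainGraph Q).Adj a b) :
    IsEdge Q (a, b) := by
  refine ⟨h.1, h.2.elim id fun hba => ?_⟩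
  have hπQ : 0 < π a * Q a b := hrev a b ▸ mul_pos (hπpos b) hba
  exact pos_of_mul_pos_right hπQ (hπpos a).le

/-- The set whose infimum is `edgeDist Q e e'`. -/
def edgeChainLengths (Q : X → X → ℝ) (e e' : X × X) : Set ℕ :=
  {n : ℕ | ∃ c : ℕ → X, c 0 = e.1 ∧ c 1 = e.2 ∧ c n = e'.1 ∧ c (n + 1) = e'.2 ∧
    ∀ i < n + 1, (chainGraph Q).Adj (c i) (c (i + 1))}

theorem edgeDist_le {e e' : X × X} {n : ℕ} (h : n ∈ edgeChainLengths Q e e') :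
    edgeDist Q e e' ≤ n :=
  Nat.sInf_le h

theorem graphDist_le_of_mem_edgeChainLengths {e e' : X × X} {n : ℕ}
    (h : n ∈ edgeChainLengths Q e e') : graphDist Q e.1 e'.1 ≤ n := by
  obtain ⟨c, hc0, -, hcn, -, hadj⟩ := h
  rw [← hc0, ← hcn]
  exact SimpleGraph.dist_le_of_adj_succ c n fun i hi => hadj i (by omega)

theorem graphDist_le_edgeDist {e e' : X × X} (h : (edgeChainLengths Q e e').Nonempty) :
    graphDist Q e.1 e'.1 ≤ edgeDist Q e e' :=
  graphDist_le_of_mem_edgeChainLengths (Nat.sInf_mem h)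

theorem chainGraph_adj_of_mem_edgeChainLengths {e e' : X × X} {n : ℕ}
    (h : n ∈ edgeChainLengths Q e e') : (chainGraph Q).Adj e'.1 e'.2 := by
  obtain ⟨c, -, -, hcn, hcn', hadj⟩ := h
  exact hcn ▸ hcn' ▸ hadj n n.lt_succ_self

theorem SimpleGraph.Walk.length_pred_mem_edgeChainLengths {a b : X}
    (p : (chainGraph Q).Walk a b) (hp : 0 < p.length) :
    p.length - 1 ∈ edgeChainLengths Q (a, p.getVert 1) (p.getVert (p.length - 1), b) := by
  refine ⟨p.getVert, p.getVert_zero, rfl, rfl, ?_, fun i hi => p.adj_getVert_succ (by omega)⟩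
  rw [Nat.sub_add_cancel hp, p.getVert_length]

end

theorem zpow_neg_graphDist_mul_le_fStar (Q : X → X → ℝ) (r : ℝ) (f : X → ℝ) (x z : X) :
    r ^ (-(graphDist Q x z : ℤ)) * f z ≤ fStar Q r f x :=
  le_sup' (fun z => r ^ (-(graphDist Q x z : ℤ)) * f z) (mem_univ z)

theorem exists_fStar_eq (Q : X → X → ℝ) (r : ℝ) (f : X → ℝ) (x : X) :
    ∃ z, fStar Q r f x = r ^ (-(graphDist Q x z : ℤ)) * f z := by
  obtain ⟨z, -, hz⟩ := exists_mem_eq_sup' univ_nonempty fun z => r ^ (-(graphDist Q x z : ℤ)) * f z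
  exact ⟨z, hz⟩

theorem zpow_neg_mul_le_of_le {r a : ℝ} (hr : 1 ≤ r) (ha : 0 ≤ a) {m n : ℕ} (hmn : m ≤ n) :
    r ^ (-(n : ℤ)) * a ≤ r ^ (-(m : ℤ)) * a := by
  gcongr

theorem fStar_local_comparison_general
    (π : X → ℝ) (Q : X → X → ℝ)
    (hirr : MarkovIrreducible Q)
    (hπpos : ∀ x : X, 0 < π x)
    (hrev : ∀ x y : X, π x * Q x y = π y * Q y x)
    (r : ℝ) (hr : 1 ≤ r) (f : X → ℝ) (hf : ∀ x, 0 < f x)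
    (x y : X) (hxy : IsEdge Q (x, y)) (hord : fStar Q r f x ≤ fStar Q r f y) :
     ∃ x' y' : X, IsEdge Q (x', y') ∧
      r ^ (-(edgeDist Q (x, y) (x', y') : ℤ)) * f x' ≤ fStar Q r f x ∧
      fStar Q r f x ≤ fStar Q r f y ∧
      fStar Q r f y ≤ r ^ (-(edgeDist Q (x, y) (x', y') : ℤ)) * f y' := by
  obtain ⟨z, hz⟩ := exists_fStar_eq Q r f y
  obtain ⟨w, hw⟩ := (chainGraph_preconnected hirr y z).exists_walk_length_eq_dist
  have hadj : (chainGraph Q).Adj x y := ⟨hxy.1, Or.inl hxy.2⟩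
  set p := SimpleGraph.Walk.cons hadj w
  set x' := p.getVert (graphDist Q y z)
  have hmem : graphDist Q y z ∈ edgeChainLengths Q (x, y) (x', z) := by
    simpa [x', p, hw, graphDist] using p.length_pred_mem_edgeChainLengths (by simp [p])
  refine ⟨x', z, isEdge_of_chainGraph_adj hπpos hrev (chainGraph_adj_of_mem_edgeChainLengths hmem),
    ?_, hord, ?_⟩
  · calc r ^ (-(edgeDist Q (x, y) (x', z) : ℤ)) * f x'
        ≤ r ^ (-(graphDist Q x x' : ℤ)) * f x' :=
          zpow_neg_mul_le_of_le hr (hf x').le (graphDist_le_edgeDist ⟨_, hmem⟩)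
      _ ≤ fStar Q r f x := zpow_neg_graphDist_mul_le_fStar Q r f x x'
  · exact hz.trans_le (zpow_neg_mul_le_of_le hr (hf z).le (edgeDist_le hmem))

theorem fStar_local_comparison
    (π : X → ℝ) (Q : X → X → ℝ)
    (hQ : ∀ x y : X, x ≠ y → 0 ≤ Q x y)
    (hQsum : ∀ x : X, ∑ y : X, Q x y = 0)
    (hirr : MarkovIrreducible Q)
    (hπpos : ∀ x : X, 0 < π x)
    (hπsum : ∑ x : X, π x = 1)
    (hrev : ∀ x y : X, π x * Q x y = π y * Q y x)
    (r : ℝ) (hr : 1 ≤ r) (f : X → ℝ) (hf : ∀ x, 0 < f x)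
    (x y : X) (hxy : IsEdge Q (x, y)) (hord : fStar Q r f x ≤ fStar Q r f y) :
     ∃ x' y' : X, IsEdge Q (x', y') ∧
      r ^ (-(edgeDist Q (x, y) (x', y') : ℤ)) * f x' ≤ fStar Q r f x ∧
      fStar Q r f x ≤ fStar Q r f y ∧
      fStar Q r f y ≤ r ^ (-(edgeDist Q (x, y) (x', y') : ℤ)) * f y' :=
  fStar_local_comparison_general π Q hirr hπpos hrev r hr f hf x y hxy hord

end
end

section
/- (Comparison of entropies) Assume p ≤ 1/2 and let r := 4/p². For any f : X → (0,∞), with f_⋆(x) := max_{z∈X} r^{−d(x,z)}·f(z), one has Ent(f) ≤ 2·Ent(f_⋆). -/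
open Finset

noncomputable section

variable {X : Type*} [Fintype X] [DecidableEq X] [Nonempty X]

/-!
Write `φ = klFun`, so `φ(u) = u log u + 1 - u`. For every `m > 0`, `Ent(f) ≤ m E[φ(f/m)]` with
equality at `m = E[f]`. Taking `m = E[f⋆]` and using that `f ↦ f⋆` commutes with scaling, it
suffices to show `E[φ(F)] ≤ 2 E[φ(F⋆)]` for every `F ≥ 0`.

Since `F ≤ F⋆`, the pointwise bound `φ(F) ≤ 2 φ(F⋆)` can only fail where `F < F⋆` and
`F⋆ ∈ (7/40, e)`. At such an `x`, `F⋆(x) = r^{-d} F(z)` for some `z` at distance `d ≥ 1`. Then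
`F(z) ≥ 16 · 7/40 > e`, so `z` has the surplus `φ(F(z)) - 1`. Since `r ≥ 16`, all points charged to
`z` lie on the sphere of radius `d` around `z`. Reversibility gives `π(x) ≤ π(y)/p` along edges,
and degrees are at most `1/p`, so this sphere has `π`-mass at most `(r/4)^d π(z)`. A one-variable
estimate of `φ` shows that `(r/4)^d` times the deficit is at most the surplus of `z`.
-/

open InformationTheory Set

lemma mul_klFun_div (u : ℝ) {v : ℝ} (hv : v ≠ 0) :
    v * klFun (u / v) = u * Real.log u - u * Real.log v + v - u := by
  rcases eq_or_ne u 0 with rfl | hu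
  · simp [klFun]
  · rw [klFun, Real.log_div hu hv]
    field_simp

lemma mul_log_add_sub_le_mul_log {u v : ℝ} (hu : 0 ≤ u) (hv : 0 < v) :
    u * Real.log v + u - v ≤ u * Real.log u := by
  have := mul_nonneg hv.le (klFun_nonneg (div_nonneg hu hv.le))
  rw [mul_klFun_div u hv.ne'] at this
  linarith

lemma klFun_le_one {u : ℝ} (hu : 0 ≤ u) (hu1 : u ≤ 1) : klFun u ≤ 1 := by
  have := Real.mul_log_nonpos hu hu1
  rw [klFun]
  linarith

lemma one_le_klFun {u : ℝ} (hu : Real.exp 1 ≤ u) : 1 ≤ klFun u := by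
  have hu0 : 0 < u := (Real.exp_pos 1).trans_le hu
  have : 1 ≤ Real.log u := (Real.le_log_iff_exp_le hu0).mpr hu
  rw [klFun]
  nlinarith

lemma monotoneOn_klFun : MonotoneOn klFun (Ici 1) := by
  refine monotoneOn_of_deriv_nonneg (convex_Ici 1) continuous_klFun.continuousOn
    (fun x hx => ?_) (fun x hx => ?_)
  · rw [interior_Ici] at hx
    exact (hasDerivAt_klFun (by linarith [mem_Ioi.mp hx])).differentiableAt.differentiableWithinAt
  · rw [interior_Ici] at hx
    rw [deriv_klFun]
    exact Real.log_nonneg (le_of_lt hx)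

lemma one_le_two_mul_klFun {q : ℝ} (hq : 0 ≤ q) (hq' : q ≤ 7 / 40) : 1 ≤ 2 * klFun q := by
  have tangent := mul_log_add_sub_le_mul_log hq (by norm_num : (0:ℝ) < 1 / 8)
  have hlog : Real.log (1 / 8) = -(3 * Real.log 2) := by
    rw [one_div, Real.log_inv, show (8:ℝ) = 2 ^ 3 by norm_num, Real.log_pow]; push_cast; ring
  rw [hlog] at tangent
  have := Real.log_two_lt_d9
  rw [klFun]
  nlinarith

lemma log_sixteen_gt : (2.77 : ℝ) < Real.log 16 := by
  rw [show (16:ℝ) = 2 ^ 4 by norm_num, Real.log_pow]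
  have := Real.log_two_gt_d9
  push_cast
  linarith

lemma exp_one_lt_pow_mul {r b : ℝ} {n : ℕ} (hr : 16 ≤ r) (hn : 0 < n) (hb : 7 / 40 < b) :
    Real.exp 1 < r ^ n * b :=
  calc Real.exp 1 < 16 * (7 / 40) := Real.exp_one_lt_d9.trans (by norm_num)
    _ ≤ r ^ n * b := by
      gcongr
      exact hr.trans (le_self_pow₀ (by linarith) hn.ne')

lemma pow_mul_lt_pow_mul {r a b : ℝ} {i j : ℕ} (hr : 16 ≤ r) (ha : a < Real.exp 1)
    (hb : 7 / 40 < b) (hij : i < j) : r ^ i * a < r ^ j * b :=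
  calc r ^ i * a < r ^ i * (r ^ (j - i) * b) :=
        mul_lt_mul_of_pos_left (ha.trans (exp_one_lt_pow_mul hr (Nat.sub_pos_of_lt hij) hb))
          (pow_pos (by linarith) i)
    _ = r ^ j * b := by rw [← mul_assoc, ← pow_add, Nat.add_sub_cancel' hij.le]

lemma eq_of_pow_mul_eq_pow_mul {r a b : ℝ} {i j : ℕ} (hr : 16 ≤ r)
    (ha : a ∈ Ioo (7 / 40) (Real.exp 1)) (hb : b ∈ Ioo (7 / 40) (Real.exp 1))
    (h : r ^ i * a = r ^ j * b) : i = j ∧ a = b := by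
  rcases lt_trichotomy i j with hij | rfl | hij
  · exact absurd h (pow_mul_lt_pow_mul hr ha.2 hb.1 hij).ne
  · exact ⟨rfl, mul_left_cancel₀ (pow_pos (by linarith) i).ne' h⟩
  · exact absurd h (pow_mul_lt_pow_mul hr hb.2 ha.1 hij).ne'

noncomputable def klCap (v : ℝ) : ℝ := if v ≤ 1 then 1 else klFun v + 1

lemma klFun_le_klCap {u v : ℝ} (hu : 0 ≤ u) (huv : u ≤ v) : klFun u ≤ klCap v := by
  unfold klCap
  split_ifs with hv
  · exact klFun_le_one hu (huv.trans hv)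
  · rcases le_or_gt u 1 with hu1 | hu1
    · linarith [klFun_le_one hu hu1, klFun_nonneg (hu.trans huv)]
    · linarith [monotoneOn_klFun (mem_Ici.mpr hu1.le) (mem_Ici.mpr (hu1.le.trans huv)) huv]

lemma klCap_sub_two_mul_klFun_le_one {q : ℝ} (hq : 0 ≤ q) : klCap q - 2 * klFun q ≤ 1 := by
  have := klFun_nonneg hq
  unfold klCap
  split_ifs <;> linarith

lemma klCap_sub_two_mul_klFun_div_four_le {q : ℝ} (hq : 0 < q) :
    (klCap q - 2 * klFun q) / 4 ≤ q * (Real.log 16 + Real.log q - 1) := by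
  unfold klCap klFun
  split_ifs with hq1
  · -- the tangent line of `u log u` at `1/6`, and `6 ^ 6 ≤ 16 ^ 4`
    have tangent := mul_log_add_sub_le_mul_log hq.le (by norm_num : (0:ℝ) < 1 / 6)
    have hlog : 0 ≤ 4 * Real.log 16 + 6 * Real.log (1 / 6) := by
      have : Real.log (16 ^ 4 * (1 / 6) ^ 6) = 4 * Real.log 16 + 6 * Real.log (1 / 6) := by
        rw [Real.log_mul (by norm_num) (by norm_num), Real.log_pow, Real.log_pow]
        push_cast
        ring
      exact this ▸ Real.log_nonneg (by norm_num)
    nlinarith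
  · have := log_sixteen_gt
    have := Real.log_nonneg (le_of_not_ge hq1)
    nlinarith

lemma pow_div_four_mul_le_klFun_sub_one {r q : ℝ} {d : ℕ} (hr : 16 ≤ r) (hd : 1 ≤ d)
    (hq : 7 / 40 ≤ q) :
    (r / 4) ^ d * (klCap q - 2 * klFun q) ≤ klFun (r ^ d * q) - 1 := by
  have hq0 : 0 < q := by linarith
  have hrd : 0 < r ^ d := by positivity
  set D := klCap q - 2 * klFun q
  have hlog : Real.log 16 ≤ Real.log r := Real.log_le_log (by norm_num) hr
  suffices h : D / 4 ^ d ≤ q * (d * Real.log 16 + Real.log q - 1) by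
    calc (r / 4) ^ d * D = r ^ d * (D / 4 ^ d) := by rw [div_pow]; ring
      _ ≤ r ^ d * (q * (d * Real.log r + Real.log q - 1)) := by
        gcongr
        exact h.trans (by gcongr)
      _ = klFun (r ^ d * q) - 1 := by
        rw [klFun, Real.log_mul hrd.ne' hq0.ne', Real.log_pow]
        ring
  obtain rfl | hd2 := hd.eq_or_lt
  · simpa using klCap_sub_two_mul_klFun_div_four_le hq0
  · have h4 : (16 : ℝ) ≤ 4 ^ d := by
      calc (16 : ℝ) = 4 ^ 2 := by norm_num
        _ ≤ 4 ^ d := pow_le_pow_right₀ (by norm_num) hd2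
    calc D / 4 ^ d ≤ 1 / 4 ^ d := by gcongr; exact klCap_sub_two_mul_klFun_le_one hq0.le
      _ ≤ 1 / 16 := by gcongr
      _ ≤ q * (2 * Real.log 16 + Real.log q - 1) := by
        have tangent := mul_log_add_sub_le_mul_log hq0.le (Real.exp_pos (-1))
        rw [Real.log_exp] at tangent
        have : Real.exp (-1) < 0.368 := by
          rw [Real.exp_neg, inv_lt_comm₀ (Real.exp_pos 1) (by norm_num)]
          linarith [Real.exp_one_gt_d9]
        nlinarith [log_sixteen_gt]
      _ ≤ q * (d * Real.log 16 + Real.log q - 1) := by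
        gcongr
        exact_mod_cast hd2

noncomputable def klSurplus (u : ℝ) : ℝ := if Real.exp 1 ≤ u then klFun u - 1 else 0

noncomputable def klDeficit (u v : ℝ) : ℝ :=
  if u < v ∧ v ∈ Ioo (7 / 40) (Real.exp 1) then klCap v - 2 * klFun v else 0

lemma klSurplus_nonneg (u : ℝ) : 0 ≤ klSurplus u := by
  unfold klSurplus
  split_ifs with h
  · linarith [one_le_klFun h]
  · rfl

lemma klFun_add_klSurplus_le {u v : ℝ} (hu : 0 ≤ u) (huv : u ≤ v) :
    klFun u + klSurplus u ≤ 2 * klFun v + klDeficit u v := by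
  have hcap := klFun_le_klCap hu huv
  unfold klSurplus klDeficit
  split_ifs with heu hdef hdef
  · linarith [hdef.1, hdef.2.2]
  · have h1 : (1 : ℝ) ≤ u := by linarith [Real.add_one_le_exp 1]
    linarith [monotoneOn_klFun (mem_Ici.mpr h1) (mem_Ici.mpr (h1.trans huv)) huv]
  · linarith
  obtain rfl | huv := huv.eq_or_lt
  · linarith [klFun_nonneg hu]
  rcases le_or_gt (Real.exp 1) v with hev | hve
  · have : klCap v = klFun v + 1 := if_neg (by linarith [Real.add_one_le_exp 1])
    linarith [one_le_klFun hev]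
  · have hv : v ≤ 7 / 40 := by
      by_contra h
      exact hdef ⟨huv, lt_of_not_ge h, hve⟩
    have : klCap v = 1 := if_pos (by linarith)
    linarith [one_le_two_mul_klFun (hu.trans huv.le) hv]

namespace SimpleGraph

variable {V : Type*} {G : SimpleGraph V}

lemma Connected.exists_adj_dist_eq {x z : V} {n : ℕ} (hG : G.Connected)
    (h : G.dist x z = n + 1) : ∃ y, G.Adj x y ∧ G.dist y z = n := by
  obtain ⟨w, hw⟩ := hG.exists_walk_length_eq_dist x z
  cases w with
  | nil => simp_all
  | @cons _ y _ hxy q =>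
    refine ⟨y, hxy, le_antisymm ?_ ?_⟩
    · have := dist_le q
      simp only [Walk.length_cons] at hw
      omega
    · have := hG.dist_triangle (u := x) (v := y) (w := z)
      rw [dist_eq_one_iff_adj.mpr hxy] at this
      omega

variable [Fintype V] [DecidableEq V] [DecidableRel G.Adj]

lemma Connected.sum_dist_eq_le (hG : G.Connected) {w : V → ℝ} (hw : ∀ x, 0 ≤ w x) {a b : ℝ}
    (ha : 0 ≤ a) (hadj : ∀ x y, G.Adj x y → w x ≤ a * w y) (hdeg : ∀ y, (G.degree y : ℝ) ≤ b)
    (z : V) (n : ℕ) : ∑ x with G.dist x z = n, w x ≤ (a * b) ^ n * w z := by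
  induction n with
  | zero =>
    have : ({x | G.dist x z = 0} : Finset V) = {z} := by
      ext x; simp [hG.dist_eq_zero_iff]
    rw [this, sum_singleton, pow_zero, one_mul]
  | succ n ih =>
    set S := ({x | G.dist x z = n} : Finset V)
    set T := ({x | G.dist x z = n + 1} : Finset V)
    have hb : 0 ≤ b := (Nat.cast_nonneg _).trans (hdeg z)
    have hite : ∀ x y, 0 ≤ if G.Adj y x then w y else 0 := fun x y => by
      split_ifs
      exacts [hw y, le_rfl]
    calc ∑ x ∈ T, w x ≤ ∑ x ∈ T, a * ∑ y ∈ S, if G.Adj y x then w y else 0 := by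
          refine sum_le_sum fun x hx => ?_
          obtain ⟨y, hxy, hy⟩ := hG.exists_adj_dist_eq (mem_filter.mp hx).2
          calc w x ≤ a * (if G.Adj y x then w y else 0) := by
                rw [if_pos hxy.symm]
                exact hadj x y hxy
            _ ≤ _ := by
              gcongr
              exact single_le_sum (fun y _ => hite x y) (mem_filter.mpr ⟨mem_univ y, hy⟩)
      _ = a * ∑ y ∈ S, ∑ x ∈ T, if G.Adj y x then w y else 0 := by
          rw [← mul_sum, sum_comm]
      _ ≤ a * ∑ y ∈ S, b * w y := by
          gcongr with y
          calc ∑ x ∈ T, (if G.Adj y x then w y else 0)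
              ≤ ∑ x, if G.Adj y x then w y else 0 :=
                sum_le_sum_of_subset_of_nonneg (subset_univ T) fun x _ _ => hite x y
            _ = G.degree y * w y := by
                rw [sum_ite, sum_const_zero, add_zero, sum_const, nsmul_eq_mul,
                  ← card_neighborFinset_eq_degree, neighborFinset_eq_filter]
            _ ≤ b * w y := by gcongr; exacts [hw y, hdeg y]
      _ = a * b * ∑ y ∈ S, w y := by rw [← mul_sum, mul_assoc]
      _ ≤ a * b * ((a * b) ^ n * w z) := by have := mul_nonneg ha hb; gcongr
      _ = (a * b) ^ (n + 1) * w z := by ring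

end SimpleGraph

section MarkovChain

variable {V : Type*} {π : V → ℝ} {Q : V → V → ℝ}

lemma chainGraph_connected [Nonempty V] (hirr : MarkovIrreducible Q) :
    (chainGraph Q).Connected :=
  ⟨fun x y => (SimpleGraph.reachable_iff_reflTransGen x y).mpr
    (Relation.ReflTransGen.mono (fun _ _ h => ⟨h.1, Or.inl h.2⟩) _ _ (hirr x y))⟩

lemma pos_of_chainGraph_adj (hπ : ∀ x, 0 < π x) (hrev : ∀ x y, π x * Q x y = π y * Q y x)
    {x y : V} (h : (chainGraph Q).Adj x y) : 0 < Q x y :=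
  h.2.elim id fun h' => pos_of_mul_pos_right ((hrev x y).symm ▸ mul_pos (hπ y) h') (hπ x).le

variable [Fintype V] [DecidableEq V]

lemma le_jumpRate (hQ : ∀ x y, x ≠ y → 0 ≤ Q x y) {x y : V} (hxy : x ≠ y) :
    Q x y ≤ jumpRate Q x :=
  single_le_sum (fun w hw => hQ x w (ne_of_mem_erase hw).symm)
    (mem_erase.mpr ⟨hxy.symm, mem_univ y⟩)

lemma finite_sparsity_set (Q : V → V → ℝ) :
    {s : ℝ | ∃ x y, x ≠ y ∧ 0 < Q x y ∧ s = Q x y / max (jumpRate Q x) (Q y x)}.Finite :=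
  (Set.finite_range fun e : V × V => Q e.1 e.2 / max (jumpRate Q e.1) (Q e.2 e.1)).subset
    fun _ ⟨x, y, _, _, hs⟩ => ⟨(x, y), hs.symm⟩

lemma sparsity_le_div {x y : V} (hxy : x ≠ y) (h : 0 < Q x y) :
    sparsity Q ≤ Q x y / max (jumpRate Q x) (Q y x) :=
  csInf_le (finite_sparsity_set Q).bddBelow ⟨x, y, hxy, h, rfl⟩

lemma sparsity_pos [Nontrivial V] (hQ : ∀ x y, x ≠ y → 0 ≤ Q x y)
    (hirr : MarkovIrreducible Q) : 0 < sparsity Q := by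
  obtain ⟨x, y, hxy⟩ := exists_pair_ne V
  obtain h | ⟨z, ⟨hxz, hQxz⟩, -⟩ := (hirr x y).cases_head
  · exact absurd h hxy
  have hne : {s : ℝ | ∃ x y, x ≠ y ∧ 0 < Q x y ∧
      s = Q x y / max (jumpRate Q x) (Q y x)}.Nonempty := ⟨_, x, z, hxz, hQxz, rfl⟩
  obtain ⟨a, b, hab, hQab, hs⟩ := hne.csInf_mem (finite_sparsity_set Q)
  rw [sparsity, hs]
  exact div_pos hQab (lt_max_of_lt_left (hQab.trans_le (le_jumpRate hQ hab)))

lemma sparsity_mul_le_of_adj (hπ : ∀ x, 0 < π x) (hrev : ∀ x y, π x * Q x y = π y * Q y x)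
    {x y : V} (h : (chainGraph Q).Adj x y) : sparsity Q * π x ≤ π y := by
  have hxy := pos_of_chainGraph_adj hπ hrev h
  have hyx := pos_of_chainGraph_adj hπ hrev h.symm
  have hp : sparsity Q * Q y x ≤ Q x y := by
    rw [← le_div_iff₀ hyx]
    exact (sparsity_le_div h.1 hxy).trans
      (div_le_div_of_nonneg_left hxy.le hyx (le_max_right _ _))
  have := hrev x y
  nlinarith [hπ x]

lemma sparsity_mul_degree_le_one [DecidableRel (chainGraph Q).Adj]
    (hQ : ∀ x y, x ≠ y → 0 ≤ Q x y) (hπ : ∀ x, 0 < π x)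
    (hrev : ∀ x y, π x * Q x y = π y * Q y x) (y : V) :
    sparsity Q * (chainGraph Q).degree y ≤ 1 := by
  obtain hdeg | ⟨w₀, hw₀⟩ := ((chainGraph Q).neighborFinset y).eq_empty_or_nonempty
  · simp [← SimpleGraph.card_neighborFinset_eq_degree, hdeg]
  have hjump : 0 < jumpRate Q y := by
    have h := (SimpleGraph.mem_neighborFinset _ _ _).mp hw₀
    exact (pos_of_chainGraph_adj hπ hrev h).trans_le (le_jumpRate hQ h.1)
  have hnbr : ∀ w ∈ (chainGraph Q).neighborFinset y, sparsity Q * jumpRate Q y ≤ Q y w := by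
    intro w hw
    have h := (SimpleGraph.mem_neighborFinset _ _ _).mp hw
    have hyw := pos_of_chainGraph_adj hπ hrev h
    rw [← le_div_iff₀ hjump]
    exact (sparsity_le_div h.1 hyw).trans
      (div_le_div_of_nonneg_left hyw.le hjump (le_max_left _ _))
  have hsum : ((chainGraph Q).degree y : ℝ) * (sparsity Q * jumpRate Q y) ≤ jumpRate Q y :=
    calc ((chainGraph Q).degree y : ℝ) * (sparsity Q * jumpRate Q y)
        = ∑ _w ∈ (chainGraph Q).neighborFinset y, sparsity Q * jumpRate Q y := by
          rw [sum_const, nsmul_eq_mul, SimpleGraph.card_neighborFinset_eq_degree]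
      _ ≤ ∑ w ∈ (chainGraph Q).neighborFinset y, Q y w := sum_le_sum hnbr
      _ ≤ jumpRate Q y := by
          refine sum_le_sum_of_subset_of_nonneg (fun w hw => ?_) fun w hw _ =>
            hQ y w (ne_of_mem_erase hw).symm
          exact mem_erase.mpr ⟨((SimpleGraph.mem_neighborFinset _ _ _).mp hw).1.symm, mem_univ w⟩
  nlinarith

lemma sum_graphDist_eq_le [Nonempty V] (hQ : ∀ x y, x ≠ y → 0 ≤ Q x y)
    (hirr : MarkovIrreducible Q) (hπ : ∀ x, 0 < π x) (hrev : ∀ x y, π x * Q x y = π y * Q y x)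
    (hp : 0 < sparsity Q) (z : V) (n : ℕ) :
    ∑ x with graphDist Q x z = n, π x ≤ ((sparsity Q)⁻¹ * (sparsity Q)⁻¹) ^ n * π z := by
  classical
  refine (chainGraph_connected hirr).sum_dist_eq_le (fun x => (hπ x).le) (inv_nonneg.mpr hp.le)
    (fun x y h => ?_) (fun y => ?_) z n
  · rw [le_inv_mul_iff₀ hp]
    exact sparsity_mul_le_of_adj hπ hrev h
  · rw [← one_div, le_div_iff₀' hp]
    exact sparsity_mul_degree_le_one hQ hπ hrev y

end MarkovChain

section Entropy

variable {V : Type*} [Fintype V] {π : V → ℝ}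

lemma mul_sum_klFun_div_eq (hπ : ∑ x, π x = 1) (f : V → ℝ) {m : ℝ} (hm : m ≠ 0) :
    m * ∑ x, π x * klFun (f x / m) = entropy π f + m * klFun (mean π f / m) := by
  calc m * ∑ x, π x * klFun (f x / m)
      = ∑ x, π x * (f x * Real.log (f x) - f x * Real.log m + m - f x) := by
        rw [mul_sum]
        exact sum_congr rfl fun x _ => by rw [← mul_klFun_div _ hm]; ring
    _ = mean π (fun x => f x * Real.log (f x)) - mean π f * Real.log m + m - mean π f := by
        simp only [mean, mul_sub, mul_add, ← mul_assoc, sum_sub_distrib, sum_add_distrib,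
          ← sum_mul, hπ, one_mul]
    _ = entropy π f + m * klFun (mean π f / m) := by
        rw [mul_klFun_div _ hm, entropy]
        ring

lemma entropy_le_mul_sum_klFun (hπ0 : ∀ x, 0 ≤ π x) (hπ : ∑ x, π x = 1) {f : V → ℝ}
    (hf : ∀ x, 0 ≤ f x) {m : ℝ} (hm : 0 < m) :
    entropy π f ≤ m * ∑ x, π x * klFun (f x / m) := by
  have hmean : 0 ≤ mean π f / m :=
    div_nonneg (sum_nonneg fun x _ => mul_nonneg (hπ0 x) (hf x)) hm.le
  rw [mul_sum_klFun_div_eq hπ f hm.ne']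
  linarith [mul_nonneg hm.le (klFun_nonneg hmean)]

lemma entropy_eq_mean_mul_sum_klFun (hπ : ∑ x, π x = 1) (f : V → ℝ) (hf : mean π f ≠ 0) :
    entropy π f = mean π f * ∑ x, π x * klFun (f x / mean π f) := by
  rw [mul_sum_klFun_div_eq hπ f hf, div_self hf, klFun_one, mul_zero, add_zero]

lemma entropy_eq_zero_of_subsingleton [Subsingleton V] [Nonempty V] (hπ : ∑ x, π x = 1)
    (f : V → ℝ) : entropy π f = 0 := by
  obtain ⟨x₀⟩ := ‹Nonempty V›
  have hmean : ∀ h : V → ℝ, mean π h = h x₀ := fun h => by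
    rw [Fintype.sum_subsingleton _ x₀] at hπ
    rw [mean, Fintype.sum_subsingleton _ x₀, hπ, one_mul]
  rw [entropy, hmean, hmean, sub_self]

end Entropy

section Regularization

variable {V : Type*} [Fintype V] [Nonempty V] {Q : V → V → ℝ} {r : ℝ}

lemma le_fStar (f : V → ℝ) (x : V) : f x ≤ fStar Q r f x :=
  le_sup'_of_le _ (mem_univ x) (by simp [graphDist])

lemma fStar_div (f : V → ℝ) {c : ℝ} (hc : 0 ≤ c) (x : V) :
    fStar Q r (fun y => f y / c) x = fStar Q r f x / c := by
  simp only [fStar, sup'_div₀ hc, mul_div_assoc]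

lemma exists_pow_mul_fStar_eq (hG : (chainGraph Q).Connected) (hr : r ≠ 0) {f : V → ℝ} {x : V}
    (h : f x < fStar Q r f x) :
    ∃ z, 0 < graphDist Q x z ∧ f z = r ^ graphDist Q x z * fStar Q r f x := by
  obtain ⟨z, -, hz⟩ := exists_mem_eq_sup' univ_nonempty
    fun z => r ^ (-(graphDist Q x z : ℤ)) * f z
  rw [← fStar] at hz
  have hzx : x ≠ z := by
    rintro rfl
    rw [hz, graphDist, SimpleGraph.dist_self] at h
    simp at h
  refine ⟨z, hG.pos_dist_of_ne hzx, ?_⟩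
  rw [hz, zpow_neg, zpow_natCast, mul_inv_cancel_left₀ (pow_ne_zero _ hr)]

end Regularization

section Comparison

variable {V : Type*} [Fintype V] {π : V → ℝ} {Q : V → V → ℝ} {r : ℝ}

-- `r ≥ 16` forces all points of `s` onto one sphere around `z`, with one common value of `G`.
lemma sum_mul_klCap_sub_le_mul_klSurplus (hπ : ∀ x, 0 ≤ π x) (hr : 16 ≤ r)
    (hshell : ∀ z n, ∑ x with graphDist Q x z = n, π x ≤ (r / 4) ^ n * π z)
    {s : Finset V} {G : V → ℝ} {z : V} {y : ℝ}
    (hs : ∀ x ∈ s, 0 < graphDist Q x z ∧ G x ∈ Ioo (7 / 40) (Real.exp 1) ∧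
      y = r ^ graphDist Q x z * G x) :
    ∑ x ∈ s, π x * (klCap (G x) - 2 * klFun (G x)) ≤ π z * klSurplus y := by
  have hyz : 0 ≤ π z * klSurplus y := mul_nonneg (hπ z) (klSurplus_nonneg y)
  obtain rfl | ⟨x₀, hx₀⟩ := s.eq_empty_or_nonempty
  · simpa using hyz
  obtain ⟨hn, hG₀, rfl⟩ := hs x₀ hx₀
  set n := graphDist Q x₀ z
  set D := klCap (G x₀) - 2 * klFun (G x₀)
  have hconst : ∀ x ∈ s, graphDist Q x z = n ∧ G x = G x₀ := fun x hx =>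
    eq_of_pow_mul_eq_pow_mul hr (hs x hx).2.1 hG₀ (hs x hx).2.2.symm
  have hsurplus : klSurplus (r ^ n * G x₀) = klFun (r ^ n * G x₀) - 1 :=
    if_pos (exp_one_lt_pow_mul hr hn hG₀.1).le
  have hsum : ∑ x ∈ s, π x * (klCap (G x) - 2 * klFun (G x)) = (∑ x ∈ s, π x) * D := by
    rw [sum_mul]
    exact sum_congr rfl fun x hx => by rw [(hconst x hx).2]
  rw [hsum]
  rcases le_or_gt D 0 with hD | hD
  · exact (mul_nonpos_of_nonneg_of_nonpos (sum_nonneg fun x _ => hπ x) hD).trans hyz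
  calc (∑ x ∈ s, π x) * D ≤ (∑ x with graphDist Q x z = n, π x) * D := by
        refine mul_le_mul_of_nonneg_right (sum_le_sum_of_subset_of_nonneg
          (fun x hx => ?_) fun x _ _ => hπ x) hD.le
        exact mem_filter.mpr ⟨mem_univ x, (hconst x hx).1⟩
    _ ≤ ((r / 4) ^ n * π z) * D := by gcongr; exact hshell z n
    _ = π z * ((r / 4) ^ n * D) := by ring
    _ ≤ π z * klSurplus (r ^ n * G x₀) := by
        rw [hsurplus]
        exact mul_le_mul_of_nonneg_left (pow_div_four_mul_le_klFun_sub_one hr hn hG₀.1.le) (hπ z)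

lemma sum_klDeficit_le_sum_klSurplus [Nonempty V] (hG : (chainGraph Q).Connected)
    (hπ : ∀ x, 0 ≤ π x) (hr : 16 ≤ r)
    (hshell : ∀ z n, ∑ x with graphDist Q x z = n, π x ≤ (r / 4) ^ n * π z) (F : V → ℝ) :
    ∑ x, π x * klDeficit (F x) (fStar Q r F x) ≤ ∑ z, π z * klSurplus (F z) := by
  classical
  set G := fStar Q r F
  set W := ({x | F x < G x ∧ G x ∈ Ioo (7 / 40) (Real.exp 1)} : Finset V)
  have hW : ∀ x ∈ W, ∃ z, 0 < graphDist Q x z ∧ F z = r ^ graphDist Q x z * G x :=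
    fun x hx => exists_pow_mul_fStar_eq hG (by positivity) (mem_filter.mp hx).2.1
  choose! z hz using hW
  calc ∑ x, π x * klDeficit (F x) (G x)
      = ∑ x ∈ W, π x * (klCap (G x) - 2 * klFun (G x)) := by
        rw [sum_filter]
        exact sum_congr rfl fun x _ => by rw [klDeficit, mul_ite, mul_zero]
    _ = ∑ z₀ ∈ W.image z, ∑ x ∈ W with z x = z₀, π x * (klCap (G x) - 2 * klFun (G x)) :=
        (sum_fiberwise_of_maps_to (fun x hx => mem_image_of_mem z hx) _).symm
    _ ≤ ∑ z₀ ∈ W.image z, π z₀ * klSurplus (F z₀) := by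
        refine sum_le_sum fun z₀ _ => sum_mul_klCap_sub_le_mul_klSurplus hπ hr hshell ?_
        intro x hx
        obtain ⟨hxW, rfl⟩ := mem_filter.mp hx
        exact ⟨(hz x hxW).1, (mem_filter.mp hxW).2.2, (hz x hxW).2⟩
    _ ≤ ∑ z₀, π z₀ * klSurplus (F z₀) :=
        sum_le_sum_of_subset_of_nonneg (subset_univ _) fun z₀ _ _ =>
          mul_nonneg (hπ z₀) (klSurplus_nonneg _)

lemma sum_klFun_le_two_mul_sum_klFun_fStar [Nonempty V] (hG : (chainGraph Q).Connected)
    (hπ : ∀ x, 0 ≤ π x) (hr : 16 ≤ r)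
    (hshell : ∀ z n, ∑ x with graphDist Q x z = n, π x ≤ (r / 4) ^ n * π z)
    {F : V → ℝ} (hF : ∀ x, 0 ≤ F x) :
    ∑ x, π x * klFun (F x) ≤ 2 * ∑ x, π x * klFun (fStar Q r F x) := by
  set G := fStar Q r F
  have hpt : ∑ x, π x * (klFun (F x) + klSurplus (F x))
      ≤ ∑ x, π x * (2 * klFun (G x) + klDeficit (F x) (G x)) :=
    sum_le_sum fun x _ => mul_le_mul_of_nonneg_left (klFun_add_klSurplus_le (hF x) (le_fStar F x))
      (hπ x)
  simp only [mul_add, sum_add_distrib, mul_left_comm _ (2 : ℝ), ← mul_sum] at hpt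
  linarith [sum_klDeficit_le_sum_klSurplus hG hπ hr hshell F]

end Comparison

theorem comparison_of_entropies_general
    (π : X → ℝ) (Q : X → X → ℝ)
    (hQ : ∀ x y : X, x ≠ y → 0 ≤ Q x y)
    (hirr : MarkovIrreducible Q)
    (hπpos : ∀ x : X, 0 < π x)
    (hπsum : ∑ x : X, π x = 1)
    (hrev : ∀ x y : X, π x * Q x y = π y * Q y x)
    (hp : sparsity Q ≤ 1 / 2) (f : X → ℝ) (hf : ∀ x, 0 < f x) :
     entropy π f ≤ 2 * entropy π (fStar Q (4 / sparsity Q ^ 2) f) := by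
  rcases subsingleton_or_nontrivial X with hX | hX
  · rw [entropy_eq_zero_of_subsingleton hπsum, entropy_eq_zero_of_subsingleton hπsum, mul_zero]
  have hp0 : 0 < sparsity Q := sparsity_pos hQ hirr
  set r := 4 / sparsity Q ^ 2
  have hr : 16 ≤ r := by
    rw [le_div_iff₀ (by positivity)]
    nlinarith
  have hshell (z : X) (n : ℕ) : ∑ x with graphDist Q x z = n, π x ≤ (r / 4) ^ n * π z := by
    rw [show r / 4 = (sparsity Q)⁻¹ * (sparsity Q)⁻¹ by ring]
    exact sum_graphDist_eq_le hQ hirr hπpos hrev hp0 z n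
  set g := fStar Q r f
  set m := mean π g
  have hm : 0 < m := sum_pos (fun x _ => mul_pos (hπpos x) ((hf x).trans_le (le_fStar f x)))
    univ_nonempty
  calc entropy π f ≤ m * ∑ x, π x * klFun (f x / m) :=
        entropy_le_mul_sum_klFun (fun x => (hπpos x).le) hπsum (fun x => (hf x).le) hm
    _ ≤ m * (2 * ∑ x, π x * klFun (fStar Q r (fun y => f y / m) x)) := by
        gcongr
        exact sum_klFun_le_two_mul_sum_klFun_fStar (chainGraph_connected hirr)
          (fun x => (hπpos x).le) hr hshell fun x => div_nonneg (hf x).le hm.le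
    _ = 2 * entropy π g := by
        simp only [fStar_div f hm.le]
        rw [entropy_eq_mean_mul_sum_klFun hπsum g hm.ne']
        ring

theorem comparison_of_entropies
    (π : X → ℝ) (Q : X → X → ℝ)
    (hQ : ∀ x y : X, x ≠ y → 0 ≤ Q x y)
    (hQsum : ∀ x : X, ∑ y : X, Q x y = 0)
    (hirr : MarkovIrreducible Q)
    (hπpos : ∀ x : X, 0 < π x)
    (hπsum : ∑ x : X, π x = 1)
    (hrev : ∀ x y : X, π x * Q x y = π y * Q y x)
    (hp : sparsity Q ≤ 1 / 2) (f : X → ℝ) (hf : ∀ x, 0 < f x) :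
     entropy π f ≤ 2 * entropy π (fStar Q (4 / sparsity Q ^ 2) f) :=
  comparison_of_entropies_general π Q hQ hirr hπpos hπsum hrev hp f hf
end
end
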